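/- With notation as in the twisting symbols: for nonzero p, q ∈ R^3, the operator norm of the commutator satisfies ‖Φ1(q)Φ1(p) − Φ1(p)Φ1(q)‖ ≤ sqrt(|p||q|) |p − q| / (E(|p|) E(|q|)), where Φ1(p) = φ1(|p|)(σ·ω_p), φ1(p) = sqrt((E(p)-1)/(2E(p))), E(p) = sqrt(p^2+1). -/

import Mathlib

open Matrix

/-- The three Pauli matrices. -/
noncomputable def pauli : Fin 3 → Matrix (Fin 2) (Fin 2) ℂ
  | 0 => !![0, 1; 1, 0]
  | 1 => !![0, -Complex.I; Complex.I, 0]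
  | 2 => !![1, 0; 0, -1]

/-- `σ · v` for `v ∈ ℝ³`. -/
noncomputable def sigmaDot (v : EuclideanSpace ℝ (Fin 3)) : Matrix (Fin 2) (Fin 2) ℂ :=
  ∑ i, (v i : ℂ) • pauli i

noncomputable def Erel (p : ℝ) : ℝ := Real.sqrt (p ^ 2 + 1)

noncomputable def phi1 (p : ℝ) : ℝ := Real.sqrt ((Erel p - 1) / (2 * Erel p))

/-- The twisting symbol `Φ₁(p) = φ₁(|p|) σ·ω_p`. -/
noncomputable def Phi1 (p : EuclideanSpace ℝ (Fin 3)) : Matrix (Fin 2) (Fin 2) ℂ :=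
  (phi1 ‖p‖ : ℂ) • sigmaDot (‖p‖⁻¹ • p)

/-!
With `ω_p = p / |p|`, the commutator is `φ₁(|q|) φ₁(|p|) [σ·ω_q, σ·ω_p]`. The matrix `σ·v` is
Hermitian with `(σ·v)² = |v|²`, so the C⋆-identity gives `‖σ·v‖ = |v|`, and writing
`[A, B] = [A, B - A]` bounds the bracket by `2 |ω_q| |ω_p - ω_q| ≤ 2 |ω_p - ω_q|`. It remains to
combine `φ₁(r) ≤ r / (√2 E(r))` with `|p| |q| |ω_p - ω_q|² ≤ |p - q|²`, which is
`2 |p| |q| ≤ |p|² + |q|²`.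
-/

open scoped Matrix.Norms.L2Operator

lemma norm_mul_sub_mul_le {R : Type*} [NormedRing R] (a b : R) :
    ‖a * b - b * a‖ ≤ 2 * ‖a‖ * ‖b - a‖ := by
  have h : a * b - b * a = a * (b - a) - (b - a) * a := by noncomm_ring
  calc ‖a * b - b * a‖ ≤ ‖a * (b - a)‖ + ‖(b - a) * a‖ := h ▸ norm_sub_le _ _
    _ ≤ ‖a‖ * ‖b - a‖ + ‖b - a‖ * ‖a‖ := add_le_add (norm_mul_le _ _) (norm_mul_le _ _)
    _ = 2 * ‖a‖ * ‖b - a‖ := by ring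

lemma norm_inv_norm_smul_le_one {E : Type*} [NormedAddCommGroup E] [NormedSpace ℝ E] (x : E) :
    ‖‖x‖⁻¹ • x‖ ≤ 1 := by
  rw [norm_smul, norm_inv, norm_norm]
  exact inv_mul_le_one_of_le₀ le_rfl (norm_nonneg _)

lemma sqrt_mul_norm_inv_norm_smul_sub_le {E : Type*} [NormedAddCommGroup E]
    [InnerProductSpace ℝ E] (x y : E) :
    √(‖x‖ * ‖y‖) * ‖‖x‖⁻¹ • x - ‖y‖⁻¹ • y‖ ≤ ‖x - y‖ := by
  rcases eq_or_ne x 0 with rfl | hx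
  · simp
  rcases eq_or_ne y 0 with rfl | hy
  · simp
  have hx' : 0 < ‖x‖ := norm_pos_iff.mpr hx
  have hy' : 0 < ‖y‖ := norm_pos_iff.mpr hy
  have h : ‖x‖ * ‖y‖ * ‖‖x‖⁻¹ • x - ‖y‖⁻¹ • y‖ ^ 2 = 2 * (‖x‖ * ‖y‖) - 2 * inner ℝ x y := by
    rw [norm_sub_sq_real, norm_smul, norm_smul, real_inner_smul_left, real_inner_smul_right]
    simp only [norm_inv, norm_norm]
    field_simp
    ring
  apply le_of_sq_le_sq _ (norm_nonneg _)
  rw [mul_pow, Real.sq_sqrt (by positivity), h, norm_sub_sq_real]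
  nlinarith [sq_nonneg (‖x‖ - ‖y‖)]

lemma pauli_isHermitian (i : Fin 3) : (pauli i).IsHermitian := by
  fin_cases i <;> ext a b <;> fin_cases a <;> fin_cases b <;> simp [pauli]

lemma sigmaDot_isHermitian (v : EuclideanSpace ℝ (Fin 3)) : (sigmaDot v).IsHermitian := by
  simp [Matrix.IsHermitian, sigmaDot, Matrix.conjTranspose_sum, (pauli_isHermitian _).eq]

lemma sigmaDot_sub (v w : EuclideanSpace ℝ (Fin 3)) :
    sigmaDot (v - w) = sigmaDot v - sigmaDot w := by
  simp [sigmaDot, sub_smul, Finset.sum_sub_distrib]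

lemma sigmaDot_mul_self (v : EuclideanSpace ℝ (Fin 3)) :
    sigmaDot v * sigmaDot v = ((‖v‖ ^ 2 : ℝ) : ℂ) • 1 := by
  rw [EuclideanSpace.norm_sq_eq]
  ext a b
  fin_cases a <;> fin_cases b <;>
    simp [sigmaDot, pauli, Fin.sum_univ_three, Matrix.mul_apply, Fin.sum_univ_two] <;>
    ring_nf <;> simp [Complex.I_sq]

lemma norm_sigmaDot (v : EuclideanSpace ℝ (Fin 3)) : ‖sigmaDot v‖ = ‖v‖ := by
  have h : ‖sigmaDot v‖ * ‖sigmaDot v‖ = ‖v‖ * ‖v‖ := by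
    rw [← Matrix.l2_opNorm_conjTranspose_mul_self, (sigmaDot_isHermitian v).eq, sigmaDot_mul_self,
      norm_smul, norm_one, mul_one, Complex.norm_real, Real.norm_of_nonneg (by positivity), sq]
  exact (mul_self_inj (norm_nonneg _) (norm_nonneg _)).mp h

lemma norm_sigmaDot_mul_sub_mul_le (v w : EuclideanSpace ℝ (Fin 3)) :
    ‖sigmaDot v * sigmaDot w - sigmaDot w * sigmaDot v‖ ≤ 2 * ‖v‖ * ‖w - v‖ := by
  simpa only [← sigmaDot_sub, norm_sigmaDot] using norm_mul_sub_mul_le (sigmaDot v) (sigmaDot w)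

lemma phi1_le {r : ℝ} (hr : 0 ≤ r) : phi1 r ≤ r / (√2 * Erel r) := by
  have hE : 1 ≤ Erel r := Real.one_le_sqrt.mpr (by nlinarith)
  have hE2 : Erel r ^ 2 = r ^ 2 + 1 := Real.sq_sqrt (by positivity)
  rw [phi1, Real.sqrt_le_iff]
  refine ⟨by positivity, ?_⟩
  rw [div_pow, mul_pow, Real.sq_sqrt zero_le_two, div_le_div_iff₀ (by positivity) (by positivity)]
  nlinarith

lemma Phi1_mul_sub_mul (p q : EuclideanSpace ℝ (Fin 3)) :
    Phi1 q * Phi1 p - Phi1 p * Phi1 q =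
      ((phi1 ‖q‖ * phi1 ‖p‖ : ℝ) : ℂ) • (sigmaDot (‖q‖⁻¹ • q) * sigmaDot (‖p‖⁻¹ • p) -
        sigmaDot (‖p‖⁻¹ • p) * sigmaDot (‖q‖⁻¹ • q)) := by
  simp only [Phi1, smul_mul_smul_comm, smul_sub, mul_comm (phi1 ‖p‖ : ℂ)]
  push_cast
  rfl

theorem twisting_commutator_norm_general (p q : EuclideanSpace ℝ (Fin 3)) :
    ‖Matrix.toEuclideanCLM (𝕜 := ℂ) (n := Fin 2) (Phi1 q * Phi1 p - Phi1 p * Phi1 q)‖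
      ≤ Real.sqrt (‖p‖ * ‖q‖) * ‖p - q‖ / (Erel ‖p‖ * Erel ‖q‖) := by
  have hφ (r : ℝ) : 0 ≤ phi1 r := Real.sqrt_nonneg _
  have hEp : 0 < Erel ‖p‖ := Real.sqrt_pos.mpr (by positivity)
  have hEq : 0 < Erel ‖q‖ := Real.sqrt_pos.mpr (by positivity)
  rw [← Matrix.cstar_norm_def, Phi1_mul_sub_mul, norm_smul, Complex.norm_real,
    Real.norm_of_nonneg (mul_nonneg (hφ _) (hφ _))]
  calc phi1 ‖q‖ * phi1 ‖p‖ * ‖_‖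
      ≤ phi1 ‖q‖ * phi1 ‖p‖ * (2 * ‖‖q‖⁻¹ • q‖ * ‖‖p‖⁻¹ • p - ‖q‖⁻¹ • q‖) := by
        gcongr
        · exact mul_nonneg (hφ _) (hφ _)
        · exact norm_sigmaDot_mul_sub_mul_le _ _
    _ ≤ ‖q‖ / (√2 * Erel ‖q‖) * (‖p‖ / (√2 * Erel ‖p‖)) * (2 * 1 * ‖‖p‖⁻¹ • p - ‖q‖⁻¹ • q‖) := by
        gcongr
        exacts [hφ _, phi1_le (norm_nonneg _), phi1_le (norm_nonneg _),
          norm_inv_norm_smul_le_one q]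
    _ = √(‖p‖ * ‖q‖) * (√(‖p‖ * ‖q‖) * ‖‖p‖⁻¹ • p - ‖q‖⁻¹ • q‖) / (Erel ‖p‖ * Erel ‖q‖) := by
        rw [← mul_assoc (√_), Real.mul_self_sqrt (by positivity)]
        field_simp
        rw [Real.sq_sqrt zero_le_two]
        ring
    _ ≤ √(‖p‖ * ‖q‖) * ‖p - q‖ / (Erel ‖p‖ * Erel ‖q‖) := by
        gcongr
        exact sqrt_mul_norm_inv_norm_smul_sub_le p q

/-- The `ℓ²`-operator norm of the commutator of twisting symbols. -/
theorem twisting_commutator_norm (p q : EuclideanSpace ℝ (Fin 3))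
    (hp : p ≠ 0) (hq : q ≠ 0) :
    ‖Matrix.toEuclideanCLM (𝕜 := ℂ) (n := Fin 2) (Phi1 q * Phi1 p - Phi1 p * Phi1 q)‖
      ≤ Real.sqrt (‖p‖ * ‖q‖) * ‖p - q‖ / (Erel ‖p‖ * Erel ‖q‖) :=
  twisting_commutator_norm_general p q
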